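/- The height of a cost-optimal basic tree representing a displacement sequence of length n is O(log n); precisely, on any leaf-to-root path, the length of the flattened sequence at least doubles with at least every other node, so the height is at most 2·log₂ n + O(1). -/

import Mathlib

inductive TT : Type where
  | con : ℕ → TT
  | vec : ℕ → ℤ → TT → TT
  | idx : List ℤ → TT → TT
  | strc : List (ℤ × TT) → TT

theorem TT.sizeOf_snd_lt {ps : List (ℤ × TT)} (p : {x // x ∈ ps}) :
    sizeOf (p.1).2 < sizeOf (TT.strc ps) := by
  obtain ⟨⟨a, b⟩, hp⟩ := p
  have := List.sizeOf_lt_of_mem hp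
  simp at this ⊢
  omega

def flatten : TT → List ℤ
  | .con c => (List.range c).map (fun i => (i : ℤ))
  | .vec c d C => (List.range c).flatMap (fun i => (flatten C).map (· + (i : ℤ) * d))
  | .idx I C => I.flatMap (fun s => (flatten C).map (· + s))
  | .strc ps => ps.attach.flatMap (fun p => (flatten p.1.2).map (· + p.1.1))
decreasing_by
  all_goals first
  | exact TT.sizeOf_snd_lt _
  | decreasing_tactic

def cost (kc kv ki ks kl : ℕ) : TT → ℕ
  | .con _ => kc
  | .vec _ _ C => kv + cost kc kv ki ks kl C
  | .idx I C => ki + I.length * kl + cost kc kv ki ks kl C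
  | .strc ps => ks + 2 * ps.length * kl + (ps.attach.map (fun p => cost kc kv ki ks kl p.1.2)).sum
decreasing_by
  all_goals first
  | exact TT.sizeOf_snd_lt _
  | decreasing_tactic

/-- Height of a type tree (a single node has height 1). -/
def height : TT → ℕ
  | .con _ => 1
  | .vec _ _ C => height C + 1
  | .idx _ C => height C + 1
  | .strc ps => (ps.attach.map (fun p => height p.1.2)).foldr max 0 + 1
decreasing_by
  all_goals first
  | exact TT.sizeOf_snd_lt _
  | decreasing_tactic

/-- `T` is a cost-optimal basic tree representing `D`
(cost model: all node constants equal to `K`, lookup cost 1). -/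
def Optimal (K : ℕ) (D : List ℤ) (T : TT) : Prop :=
  flatten T = D ∧ ∀ T' : TT, flatten T' = D → cost K K K K 1 T ≤ cost K K K K 1 T'

/-!
Subtrees of a cost-minimal tree are cost-minimal. In such a tree a `vec` node has count at
least two (count one can be dropped, count zero loses to `con 0`), so it at least doubles the
length of its child's sequence, and so does an `idx` node with at least two offsets. The other
inner nodes, `strc` nodes and singleton `idx` nodes, can absorb a child of either of these two
kinds at a strictly smaller cost, so their children double or are leaves. Hence the length
doubles at least every other step along any path, giving height `≤ 2 log₂ n + 2`.
-/

def CostMinimal (K : ℕ) (T : TT) : Prop :=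
  ∀ T', flatten T' = flatten T → cost K K K K 1 T ≤ cost K K K K 1 T'

-- Leaves and the nodes that, in a cost-minimal tree, at least double the length of the sequence.
def TT.Expands : TT → Prop
  | .idx I _ => I.length ≠ 1
  | .strc _ => False
  | _ => True

lemma flatten_strc (ps : List (ℤ × TT)) :
    flatten (.strc ps) = ps.flatMap (fun p => (flatten p.2).map (· + p.1)) := by
  rw [flatten]
  conv_rhs => rw [← List.attach_map_subtype_val ps]
  rw [List.flatMap_map]

lemma cost_strc (kc kv ki ks kl : ℕ) (ps : List (ℤ × TT)) :
    cost kc kv ki ks kl (.strc ps) =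
      ks + 2 * ps.length * kl + (ps.map fun p => cost kc kv ki ks kl p.2).sum := by
  rw [cost, List.attach_map_val (l := ps) (f := fun p : ℤ × TT => cost kc kv ki ks kl p.2)]

lemma height_strc (ps : List (ℤ × TT)) :
    height (.strc ps) = (ps.map fun p => height p.2).foldr max 0 + 1 := by
  rw [height, List.attach_map_val (l := ps) (f := fun p : ℤ × TT => height p.2)]

lemma length_flatten_vec (c : ℕ) (d : ℤ) (C : TT) :
    (flatten (.vec c d C)).length = c * (flatten C).length := by
  simp [flatten, List.length_flatMap, mul_comm]

lemma length_flatten_idx (I : List ℤ) (C : TT) :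
    (flatten (.idx I C)).length = I.length * (flatten C).length := by
  simp [flatten, List.length_flatMap]

lemma length_flatten_strc (ps : List (ℤ × TT)) :
    (flatten (.strc ps)).length = (ps.map fun p => (flatten p.2).length).sum := by
  simp [flatten_strc, List.length_flatMap]

lemma flatten_vec_one (d : ℤ) (C : TT) : flatten (.vec 1 d C) = flatten C := by
  simp [flatten]

lemma flatten_idx_singleton (s : ℤ) (C : TT) :
    flatten (.idx [s] C) = (flatten C).map (· + s) := by
  simp [flatten]

lemma le_cost (K kl : ℕ) (T : TT) : K ≤ cost K K K K kl T := by
  cases T <;> rw [cost] <;> omega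

lemma log_add_one_le_log_mul {m c : ℕ} (hm : m ≠ 0) (hc : 2 ≤ c) :
    Nat.log 2 m + 1 ≤ Nat.log 2 (c * m) := by
  rw [← Nat.log_mul_base (by norm_num) hm, mul_comm c]
  exact Nat.log_mono_right (Nat.mul_le_mul_left m hc)

lemma optimal_iff {K : ℕ} {D : List ℤ} {T : TT} :
    Optimal K D T ↔ flatten T = D ∧ CostMinimal K T := by
  refine and_congr_right fun hT => ?_
  subst hT
  rfl

lemma exists_shift_of_not_expands {C : TT} (hC : ¬ C.Expands) (s : ℤ) (kc kv ki ks kl : ℕ) :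
    ∃ C', flatten C' = (flatten C).map (· + s) ∧
      cost kc kv ki ks kl C' = cost kc kv ki ks kl C := by
  match C, hC with
  | .con _, hC | .vec .., hC => exact absurd trivial hC
  | .idx I C, hC =>
    obtain ⟨t, rfl⟩ := List.length_eq_one_iff.mp (not_not.mp hC)
    refine ⟨.idx [t + s] C, ?_, by simp [cost]⟩
    simp [flatten_idx_singleton, Function.comp_def, add_assoc]
  | .strc qs, _ =>
    refine ⟨.strc (qs.map fun q => (q.1 + s, q.2)), ?_, by simp [cost_strc, Function.comp_def]⟩
    simp [flatten_strc, List.flatMap_map, List.map_flatMap, Function.comp_def, add_assoc]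

lemma exists_cheaper_strc_of_not_expands {C : TT} (hC : ¬ C.Expands) (s : ℤ) (K : ℕ) :
    ∃ qs : List (ℤ × TT), flatten (.strc qs) = (flatten C).map (· + s) ∧
      cost K K K K 1 (.strc qs) < cost K K K K 1 (.strc [(s, C)]) := by
  match C, hC with
  | .con _, hC | .vec .., hC => exact absurd trivial hC
  | .idx I C, hC =>
    obtain ⟨t, rfl⟩ := List.length_eq_one_iff.mp (not_not.mp hC)
    refine ⟨[(t + s, C)], ?_, ?_⟩
    · simp [flatten_strc, flatten_idx_singleton, Function.comp_def, add_assoc]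
    · simp [cost_strc]
      rw [cost]
      simp
  | .strc qs, _ =>
    refine ⟨qs.map fun q => (q.1 + s, q.2), ?_, ?_⟩
    · simp [flatten_strc, List.flatMap_map, List.map_flatMap, Function.comp_def, add_assoc]
    · simp [cost_strc, Function.comp_def]

namespace CostMinimal

variable {K : ℕ}

lemma of_vec {c : ℕ} {d : ℤ} {C : TT} (h : CostMinimal K (.vec c d C)) : CostMinimal K C := by
  intro C' hC'
  have := h (.vec c d C') (by rw [flatten, flatten, hC'])
  rw [cost, cost] at this
  omega

lemma of_idx {I : List ℤ} {C : TT} (h : CostMinimal K (.idx I C)) : CostMinimal K C := by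
  intro C' hC'
  have := h (.idx I C') (by rw [flatten, flatten, hC'])
  rw [cost, cost] at this
  omega

lemma of_mem_strc {ps : List (ℤ × TT)} {s : ℤ} {C : TT} (h : CostMinimal K (.strc ps))
    (hmem : (s, C) ∈ ps) : CostMinimal K C := by
  obtain ⟨l, r, rfl⟩ := List.append_of_mem hmem
  intro C' hC'
  have := h (.strc (l ++ (s, C') :: r)) (by simp [flatten_strc, hC'])
  simp [cost_strc] at this
  omega

lemma flatten_ne_nil {T : TT} (h : CostMinimal K T)
    (hT : K < cost K K K K 1 T) : flatten T ≠ [] := by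
  intro hnil
  have := h (.con 0) (by simp [flatten, hnil])
  rw [cost] at this
  omega

lemma vec_count_ne_one (hK : 0 < K) {c : ℕ} {d : ℤ} {C : TT} (h : CostMinimal K (.vec c d C)) :
    c ≠ 1 := by
  rintro rfl
  have := h C (flatten_vec_one d C).symm
  rw [cost] at this
  omega

lemma expands_of_idx_singleton {s : ℤ} {C : TT} (h : CostMinimal K (.idx [s] C)) :
    C.Expands := by
  by_contra hC
  obtain ⟨C', hflat, hcost⟩ := exists_shift_of_not_expands hC s K K K K 1
  have := h C' (by rw [hflat, flatten_idx_singleton])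
  rw [cost, hcost] at this
  simp at this

lemma expands_of_mem_strc {ps : List (ℤ × TT)} {s : ℤ} {C : TT} (h : CostMinimal K (.strc ps))
    (hmem : (s, C) ∈ ps) : C.Expands := by
  by_contra hC
  obtain ⟨qs, hflat, hcost⟩ := exists_cheaper_strc_of_not_expands hC s K
  obtain ⟨l, r, rfl⟩ := List.append_of_mem hmem
  have := h (.strc (l ++ qs ++ r)) (by
    rw [flatten_strc] at hflat
    simp [flatten_strc, hflat])
  simp [cost_strc] at this hcost
  omega

lemma log_length_lt_vec (hK : 0 < K) {c : ℕ} {d : ℤ} {C : TT} (h : CostMinimal K (.vec c d C)) :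
    Nat.log 2 (flatten C).length + 1 ≤ Nat.log 2 (flatten (.vec c d C)).length := by
  have hne := h.flatten_ne_nil (by rw [cost]; have := le_cost K 1 C; omega)
  rw [ne_eq, ← List.length_eq_zero_iff, length_flatten_vec, mul_eq_zero, not_or] at hne
  rw [length_flatten_vec]
  exact log_add_one_le_log_mul hne.2 (by have := h.vec_count_ne_one hK; omega)

lemma log_length_lt_idx (hK : 0 < K) {I : List ℤ} {C : TT} (h : CostMinimal K (.idx I C))
    (hI : I.length ≠ 1) :
    Nat.log 2 (flatten C).length + 1 ≤ Nat.log 2 (flatten (.idx I C)).length := by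
  have hne := h.flatten_ne_nil (by rw [cost]; have := le_cost K 1 C; omega)
  rw [ne_eq, ← List.length_eq_zero_iff, length_flatten_idx, mul_eq_zero, not_or] at hne
  rw [length_flatten_idx]
  exact log_add_one_le_log_mul hne.2 (by omega)

theorem height_le (hK : 0 < K) : ∀ T : TT, CostMinimal K T →
    height T ≤ 2 * Nat.log 2 (flatten T).length + 2 ∧
      (T.Expands → height T ≤ 2 * Nat.log 2 (flatten T).length + 1)
  | .con _, _ => by simp [height]
  | .vec c d C, h => by
    have hC := (height_le hK C h.of_vec).1
    have hlog := h.log_length_lt_vec hK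
    rw [height]
    omega
  | .idx I C, h => by
    by_cases hI : I.length = 1
    · obtain ⟨s, rfl⟩ := List.length_eq_one_iff.mp hI
      have hC := (height_le hK C h.of_idx).2 h.expands_of_idx_singleton
      rw [height, flatten_idx_singleton, List.length_map]
      exact ⟨by omega, fun hs => absurd rfl hs⟩
    · have hC := (height_le hK C h.of_idx).1
      have hlog := h.log_length_lt_idx hK hI
      rw [height]
      omega
  | .strc ps, h => by
    have hchild : ∀ x ∈ ps.map fun p => height p.2,
        x ≤ 2 * Nat.log 2 (flatten (.strc ps)).length + 1 := by
      simp only [List.mem_map, forall_exists_index, and_imp]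
      rintro x ⟨s, C⟩ hmem rfl
      dsimp only
      have hC := (height_le hK C (h.of_mem_strc hmem)).2 (h.expands_of_mem_strc hmem)
      have hlen : (flatten C).length ≤ (flatten (.strc ps)).length := by
        rw [length_flatten_strc]
        exact List.single_le_sum (fun _ _ => Nat.zero_le _) _ (List.mem_map_of_mem hmem)
      have := Nat.log_mono_right (b := 2) hlen
      omega
    rw [height_strc]
    have hmax : (ps.map fun p => height p.2).foldr max 0 ≤ _ :=
      List.max_le_of_forall_le _ _ hchild
    exact ⟨by omega, fun hs => hs.elim⟩
decreasing_by
  all_goals first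
  | decreasing_tactic
  | (have := List.sizeOf_lt_of_mem hmem; simp at this ⊢; omega)

end CostMinimal

/-- The height of a cost-optimal basic tree representing a displacement sequence of
length `n` is at most `2 * log₂ n + O(1)`. -/
theorem stmt9 (K : ℕ) (hK : 0 < K) :
    ∃ c : ℕ, ∀ (D : List ℤ) (T : TT), Optimal K D T →
      height T ≤ 2 * Nat.log 2 D.length + c := by
  refine ⟨2, fun D T hT => ?_⟩
  obtain ⟨rfl, hmin⟩ := optimal_iff.mp hT
  exact (hmin.height_le hK T).1
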